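/- Let d ≥ 2. For every 0 < β < β_c, every pair of sets S, Λ with 0 ∈ S ⊆ Λ ⊆ ℤ^d, and every x ∈ Λ, one has the reversed Simon–Lieb bound G_β^Λ(0,x) ≥ G_β^S(0,x) + Σ_{y∈S, z∈Λ∖S, y∼z} G_β^S(0,y)·β·G_β^Λ(z,x) − λ·Σ_{u∈S} E_β^{S,Λ}(u)·G_β^Λ(u,x). -/

import Mathlib

open scoped ENNReal

namespace WSAW

/-- Vertices of the hypercubic lattice `ℤ^d`. -/
abbrev V (d : ℕ) := Fin d → ℤ

/-- Nearest-neighbour relation on `ℤ^d`. -/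
def Adj {d : ℕ} (x y : V d) : Prop := (∑ i, (x i - y i).natAbs) = 1

/-- A finite nearest-neighbour path in `ℤ^d` with `len` edges. -/
structure SAWPath (d : ℕ) where
  len : ℕ
  f : Fin (len + 1) → V d
  adj : ∀ i : Fin len, Adj (f i.castSucc) (f i.succ)

/-- The weight `ρ(γ) = ∏_{0 ≤ s < t ≤ |γ|} (1 - λ 1[γ(s) = γ(t)])`. -/
noncomputable def weight {d : ℕ} (lam : ℝ) (γ : SAWPath d) : ℝ :=
  ∏ s : Fin (γ.len + 1), ∏ t : Fin (γ.len + 1),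
    if s < t ∧ γ.f s = γ.f t then 1 - lam else 1

/-- Paths from `x` to `y` staying inside `Λ`. -/
def PathsIn {d : ℕ} (Λ : Set (V d)) (x y : V d) : Set (SAWPath d) :=
  {γ | γ.f 0 = x ∧ γ.f (Fin.last γ.len) = y ∧ ∀ i, γ.f i ∈ Λ}

/-- The two-point function `G_β^Λ(x,y)`, valued in `ℝ≥0∞`. -/
noncomputable def G {d : ℕ} (lam β : ℝ) (Λ : Set (V d)) (x y : V d) : ℝ≥0∞ :=
  ∑' γ : PathsIn Λ x y, ENNReal.ofReal (β ^ (γ.1.len) * weight lam γ.1)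

/-- The susceptibility `χ(β)`. -/
noncomputable def chi (d : ℕ) (lam β : ℝ) : ℝ≥0∞ :=
  ∑' x : V d, G lam β Set.univ 0 x

/-- The critical point `β_c`. -/
noncomputable def betaC (d : ℕ) (lam : ℝ) : ℝ :=
  sSup {β : ℝ | 0 ≤ β ∧ chi d lam β < ⊤}

/-- `φ_β(S) = Σ_{y ∈ S, z ∉ S, y ∼ z} β G_β^S(0,y)`. -/
noncomputable def phi (d : ℕ) (lam β : ℝ) (S : Set (V d)) : ℝ≥0∞ :=
  ∑' p : {p : V d × V d // p.1 ∈ S ∧ p.2 ∉ S ∧ Adj p.1 p.2},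
    ENNReal.ofReal β * G lam β S 0 p.1.1

/-- The `ℓ^∞` norm of a vertex. -/
def normInf {d : ℕ} (x : V d) : ℕ := Finset.univ.sup fun i => (x i).natAbs

/-- The box `Λ_n = {x : |x| ≤ n}`. -/
def box (d : ℕ) (n : ℕ) : Set (V d) := {x | normInf x ≤ n}

/-- The length `L_β(ε) = inf {k ≥ 1 : φ_β(Λ_k) ≤ 1 - ε}` (equal to `∞` if no such `k`). -/
noncomputable def Leps (d : ℕ) (lam β ε : ℝ) : ℝ≥0∞ :=
  sInf {L : ℝ≥0∞ | ∃ k : ℕ, L = k ∧ 1 ≤ k ∧ phi d lam β (box d k) ≤ ENNReal.ofReal (1 - ε)}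

/-- The sharp length `L_β = inf {k ≥ 1 : φ_β(Λ_k) ≤ e^{-2}}` (equal to `∞` if no such `k`). -/
noncomputable def Lsharp (d : ℕ) (lam β : ℝ) : ℝ≥0∞ :=
  Leps d lam β (1 - Real.exp (-2))

/-- The first coordinate `x₁` of a vertex. -/
def firstCoord {d : ℕ} (x : V d) : ℤ := if h : 0 < d then x ⟨0, h⟩ else 0

/-- The half-space `ℍ = ℤ_{≥0} × ℤ^{d-1}`. -/
def halfspace (d : ℕ) : Set (V d) := {x | 0 ≤ firstCoord x}

/-- The shifted half-space `ℍ_m = -m e₁ + ℍ = {x : x₁ ≥ -m}`. -/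
def Hset (d : ℕ) (m : ℤ) : Set (V d) := {x | -m ≤ firstCoord x}

/-- The boundary `∂S`: vertices of `S` with a neighbour outside `S`. -/
def bdry {d : ℕ} (S : Set (V d)) : Set (V d) := {y | y ∈ S ∧ ∃ z, z ∉ S ∧ Adj y z}

/-- Condition `(ℓ¹_β)`. -/
def ellOne (d : ℕ) (lam β : ℝ) : Prop :=
  ∀ n : ℕ, phi d lam β (Hset d n) < ENNReal.ofReal (1 + 1 / (2 * d))

/-- Condition `(ℓ∞_β)`. -/
def ellInf (d : ℕ) (C lam β : ℝ) : Prop :=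
  ∀ n : ℕ, ∀ x ∈ bdry (Hset d n),
    G lam β (Hset d n) 0 x < ENNReal.ofReal (C / ((max 1 n : ℕ) : ℝ) ^ (d - 1))

/-- `β*(C,λ)`. -/
noncomputable def betaStar (d : ℕ) (C lam : ℝ) : ℝ :=
  sSup {β : ℝ | β ∈ Set.Icc 0 (betaC d lam) ∧ ellOne d lam β ∧ ellInf d C lam β}

/-- `E_β^{S,Λ}(u)`. -/
noncomputable def Efun (d : ℕ) (lam β : ℝ) (S Λ : Set (V d)) (u : V d) : ℝ≥0∞ :=
  ∑' p : {p : V d × V d // p.1 ∈ S ∧ p.2 ∈ Λ \ S ∧ Adj p.1 p.2},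
    G lam β S 0 u * G lam β S u p.1.1 * ENNReal.ofReal β * G lam β Λ p.1.2 u

/-- The error amplitude `E_β^{S,Λ} = Σ_{u ∈ S} E_β^{S,Λ}(u)`. -/
noncomputable def Eamp (d : ℕ) (lam β : ℝ) (S Λ : Set (V d)) : ℝ≥0∞ :=
  ∑' u : S, Efun d lam β S Λ u

/-- The set of blocks `ℬ`. -/
def Blocks (d : ℕ) : Set (Set (V d)) :=
  {B | ∃ a b : V d, (∀ i, a i ≤ 0) ∧ (∀ i, 0 ≤ b i) ∧
    B = {x | ∀ i, a i ≤ x i ∧ x i ≤ b i}}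

/-!
Split the paths from `0` to `x` in `Λ` into those that stay in `S`, which make up `G^S(0,x)`, and
those that leave `S`. Gluing a path `γ₁ : 0 → y` in `S`, a boundary edge `yz` with `z ∈ Λ \ S` and a
path `γ₂ : z → x` in `Λ` produces each path of the second kind at most once (the cut is at the first
exit from `S`), with weight `ρ(γ₁) ρ(γ₂) (1 - λ)^k`, where `k` counts the pairs of times at which
`γ₁` and `γ₂` meet. By Bernoulli's inequality `1 ≤ (1 - λ)^k + kλ`, so the boundary sum exceeds the
weight of the glued paths by at most `λ Σ_{meetings} β^{|γ₁|+1+|γ₂|} ρ(γ₁) ρ(γ₂)`. Cutting both halves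
at a meeting point `u = γ₁(s) = γ₂(t) ∈ S` can only increase the weight, since `ρ` is
submultiplicative under splitting a path, and the four pieces `0 → u → y` in `S` and `z → u → x` in
`Λ` are exactly what `E^{S,Λ}(u) G^Λ(u,x)` counts, injectively.
-/

namespace SAWPath

variable {d : ℕ}

-- Positions are read at natural-number times, frozen at the endpoint after time `γ.len`, so that
-- cutting and gluing need no `Fin` arithmetic.
def eval (γ : SAWPath d) (i : ℕ) : V d :=
  γ.f ⟨min i γ.len, Nat.lt_succ_of_le (min_le_right _ _)⟩

lemma eval_of_le (γ : SAWPath d) {i : ℕ} (hi : i ≤ γ.len) :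
    γ.eval i = γ.f ⟨i, Nat.lt_succ_of_le hi⟩ := by
  simp only [eval, min_eq_left hi]

lemma eval_val (γ : SAWPath d) (i : Fin (γ.len + 1)) : γ.eval i = γ.f i :=
  γ.eval_of_le (Nat.le_of_lt_succ i.isLt)

lemma eval_min_len (γ : SAWPath d) (i : ℕ) : γ.eval (min i γ.len) = γ.eval i := by
  simp only [eval, min_le_right, min_eq_left]

lemma adj_eval (γ : SAWPath d) {i : ℕ} (hi : i < γ.len) : Adj (γ.eval i) (γ.eval (i + 1)) := by
  rw [γ.eval_of_le hi.le, γ.eval_of_le hi]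
  exact γ.adj ⟨i, hi⟩

lemma ext_of_eval {γ γ' : SAWPath d} (hlen : γ.len = γ'.len) (h : ∀ i, γ.eval i = γ'.eval i) :
    γ = γ' := by
  obtain ⟨n, f, hf⟩ := γ
  obtain ⟨n', f', hf'⟩ := γ'
  obtain rfl : n = n' := hlen
  obtain rfl : f = f' := funext fun i => by simpa only [eval_val] using h i
  rfl

lemma mem_pathsIn_iff {A : Set (V d)} {a b : V d} {γ : SAWPath d} :
    γ ∈ PathsIn A a b ↔ γ.eval 0 = a ∧ γ.eval γ.len = b ∧ ∀ i, γ.eval i ∈ A := by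
  simp only [PathsIn, Set.mem_ofPred_eq, eval, Nat.zero_min, min_self]
  refine and_congr Iff.rfl (and_congr Iff.rfl ⟨fun h i => h _, fun h i => ?_⟩)
  simpa [min_eq_left (Nat.le_of_lt_succ i.isLt)] using h i

lemma pathsIn_mono {A B : Set (V d)} (h : A ⊆ B) (a b : V d) : PathsIn A a b ⊆ PathsIn B a b :=
  fun _ hγ => ⟨hγ.1, hγ.2.1, fun i => h (hγ.2.2 i)⟩

def ofFun (n : ℕ) (g : ℕ → V d) (hg : ∀ i < n, Adj (g i) (g (i + 1))) : SAWPath d where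
  len := n
  f i := g i
  adj i := hg i i.isLt

lemma eval_ofFun (n : ℕ) (g : ℕ → V d) (hg) (i : ℕ) : (ofFun n g hg).eval i = g (min i n) := rfl

lemma eval_ofFun_of_le {n : ℕ} {g : ℕ → V d} {hg} {i : ℕ} (hi : i ≤ n) :
    (ofFun n g hg).eval i = g i := by
  rw [eval_ofFun, min_eq_left hi]

def take (γ : SAWPath d) (s : ℕ) : SAWPath d :=
  ofFun (min s γ.len) γ.eval fun _ hi => γ.adj_eval (lt_min_iff.mp hi).2

def drop (γ : SAWPath d) (s : ℕ) : SAWPath d :=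
  ofFun (γ.len - s) (fun i => γ.eval (s + i)) fun _ hi => γ.adj_eval (by omega)

def glue (γ₁ γ₂ : SAWPath d) (h : Adj (γ₁.eval γ₁.len) (γ₂.eval 0)) : SAWPath d :=
  ofFun (γ₁.len + 1 + γ₂.len)
    (fun i => if i ≤ γ₁.len then γ₁.eval i else γ₂.eval (i - (γ₁.len + 1))) fun i hi => by
      rcases lt_trichotomy i γ₁.len with hlt | rfl | hgt
      · rw [if_pos hlt.le, if_pos (Nat.succ_le_of_lt hlt)]
        exact γ₁.adj_eval hlt
      · rw [if_pos le_rfl, if_neg (by omega), Nat.sub_self]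
        exact h
      · rw [if_neg (by omega), if_neg (by omega),
          show i + 1 - (γ₁.len + 1) = i - (γ₁.len + 1) + 1 by omega]
        exact γ₂.adj_eval (by omega)

@[simp] lemma len_take (γ : SAWPath d) (s : ℕ) : (γ.take s).len = min s γ.len := rfl
@[simp] lemma len_drop (γ : SAWPath d) (s : ℕ) : (γ.drop s).len = γ.len - s := rfl
@[simp] lemma len_glue (γ₁ γ₂ : SAWPath d) (h) : (glue γ₁ γ₂ h).len = γ₁.len + 1 + γ₂.len := rfl

lemma eval_take (γ : SAWPath d) (s i : ℕ) : (γ.take s).eval i = γ.eval (min i s) := by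
  rw [take, eval_ofFun, ← min_assoc, eval_min_len]

lemma eval_take_of_le (γ : SAWPath d) {s i : ℕ} (hi : i ≤ s) : (γ.take s).eval i = γ.eval i := by
  rw [eval_take, min_eq_left hi]

lemma eval_drop (γ : SAWPath d) {s i : ℕ} (hi : i ≤ γ.len - s) :
    (γ.drop s).eval i = γ.eval (s + i) :=
  eval_ofFun_of_le hi

lemma eval_glue_of_le (γ₁ γ₂ : SAWPath d) (h) {i : ℕ} (hi : i ≤ γ₁.len) :
    (glue γ₁ γ₂ h).eval i = γ₁.eval i := by
  rw [glue, eval_ofFun_of_le (by omega), if_pos hi]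

lemma eval_glue_add (γ₁ γ₂ : SAWPath d) (h) {i : ℕ} (hi : i ≤ γ₂.len) :
    (glue γ₁ γ₂ h).eval (γ₁.len + 1 + i) = γ₂.eval i := by
  rw [glue, eval_ofFun_of_le (by omega), if_neg (by omega), Nat.add_sub_cancel_left]

lemma take_glue (γ₁ γ₂ : SAWPath d) (h) : (glue γ₁ γ₂ h).take γ₁.len = γ₁ :=
  ext_of_eval (by simp only [len_take, len_glue]; omega) fun i => by
    rw [eval_take, eval_glue_of_le _ _ _ (min_le_right _ _), eval_min_len]

lemma drop_glue (γ₁ γ₂ : SAWPath d) (h) : (glue γ₁ γ₂ h).drop (γ₁.len + 1) = γ₂ :=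
  ext_of_eval (by simp) fun i => by
    rw [← eval_min_len, len_drop, eval_drop _ (min_le_right _ _), len_glue,
      Nat.add_sub_cancel_left, eval_glue_add _ _ _ (min_le_right _ _), eval_min_len]

lemma take_mem {A : Set (V d)} {a b : V d} {γ : SAWPath d} (hγ : γ ∈ PathsIn A a b) {s : ℕ}
    (hs : s ≤ γ.len) : γ.take s ∈ PathsIn A a (γ.eval s) := by
  rw [mem_pathsIn_iff] at hγ ⊢
  refine ⟨by rw [eval_take_of_le _ (Nat.zero_le _), hγ.1], ?_, fun i => ?_⟩
  · rw [len_take, min_eq_left hs, eval_take_of_le _ le_rfl]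
  · exact hγ.2.2 _

lemma drop_mem {A : Set (V d)} {a b : V d} {γ : SAWPath d} (hγ : γ ∈ PathsIn A a b) {s : ℕ}
    (hs : s ≤ γ.len) : γ.drop s ∈ PathsIn A (γ.eval s) b := by
  rw [mem_pathsIn_iff] at hγ ⊢
  refine ⟨by rw [eval_drop _ (Nat.zero_le _), add_zero], ?_, fun i => ?_⟩
  · rw [len_drop, eval_drop _ le_rfl, Nat.add_sub_cancel' hs, hγ.2.1]
  · exact hγ.2.2 _

lemma glue_mem {A : Set (V d)} {a y z b : V d} {γ₁ γ₂ : SAWPath d} (h₁ : γ₁ ∈ PathsIn A a y)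
    (h₂ : γ₂ ∈ PathsIn A z b) (h) : glue γ₁ γ₂ h ∈ PathsIn A a b := by
  rw [mem_pathsIn_iff] at h₁ h₂ ⊢
  refine ⟨by rw [eval_glue_of_le _ _ _ (Nat.zero_le _), h₁.1], ?_, fun i => ?_⟩
  · rw [len_glue, eval_glue_add _ _ _ le_rfl, h₂.2.1]
  · rw [glue, eval_ofFun]
    split
    · exact h₁.2.2 _
    · exact h₂.2.2 _

lemma eq_of_take_eq_of_drop_eq {γ γ' : SAWPath d} {s : ℕ} (hs : s ≤ γ.len)
    (htake : γ.take s = γ'.take s) (hdrop : γ.drop s = γ'.drop s) : γ = γ' := by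
  have hlen : γ.len = γ'.len := by
    have h1 := congrArg len htake
    have h2 := congrArg len hdrop
    simp only [len_take, len_drop] at h1 h2
    omega
  refine ext_of_eval hlen fun i => ?_
  rcases le_or_gt i s with hi | hi
  · rw [← eval_take_of_le γ hi, htake, eval_take_of_le γ' hi]
  · rw [← eval_min_len, ← eval_min_len γ', ← hlen]
    have hk := congrArg (fun δ => δ.eval (min i γ.len - s)) hdrop
    rwa [eval_drop _ (by omega), eval_drop _ (by omega), Nat.add_sub_cancel' (by omega)] at hk

lemma len_le_of_glue_eq {S : Set (V d)} {γ₁ γ₂ γ₁' γ₂' : SAWPath d} {h h'}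
    (heq : glue γ₁ γ₂ h = glue γ₁' γ₂' h') (hγ₁ : ∀ i, γ₁.eval i ∈ S) (hγ₂' : γ₂'.eval 0 ∉ S) :
    γ₁.len ≤ γ₁'.len := by
  by_contra hlt
  apply hγ₂'
  rw [← eval_glue_add γ₁' γ₂' h' (Nat.zero_le _), add_zero, ← heq,
    eval_glue_of_le _ _ _ (by omega)]
  exact hγ₁ _

end SAWPath

section CollisionWeight

open Finset

variable {α : Type*} [DecidableEq α] (lam : ℝ)

noncomputable def collisionWeight (g : ℕ → α) (A : Finset ℕ) : ℝ :=
  ∏ s ∈ A, ∏ t ∈ A, if s < t ∧ g s = g t then 1 - lam else 1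

variable {lam}

lemma collisionWeight_congr {g g' : ℕ → α} {A : Finset ℕ} (h : ∀ i ∈ A, g i = g' i) :
    collisionWeight lam g A = collisionWeight lam g' A :=
  prod_congr rfl fun s hs => prod_congr rfl fun t ht => by rw [h s hs, h t ht]

lemma collisionWeight_Ico (g : ℕ → α) (a b : ℕ) :
    collisionWeight lam g (Ico a b) = collisionWeight lam (fun i => g (a + i)) (range (b - a)) := by
  simp only [collisionWeight, prod_Ico_eq_prod_range, add_lt_add_iff_left]

lemma collisionWeight_union_of_lt (g : ℕ → α) {A B : Finset ℕ} (hAB : ∀ a ∈ A, ∀ b ∈ B, a < b) :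
    collisionWeight lam g (A ∪ B) = collisionWeight lam g A * collisionWeight lam g B *
      ∏ a ∈ A, ∏ b ∈ B, if g a = g b then 1 - lam else 1 := by
  have hdisj : Disjoint A B :=
    disjoint_left.mpr fun a ha hb => lt_irrefl a (hAB a ha a hb)
  have hBA : ∏ b ∈ B, ∏ a ∈ A, (if b < a ∧ g b = g a then 1 - lam else 1) = 1 :=
    prod_eq_one fun b hb => prod_eq_one fun a ha => if_neg fun h => (hAB a ha b hb).not_gt h.1
  have hAB' : ∏ a ∈ A, ∏ b ∈ B, (if a < b ∧ g a = g b then 1 - lam else 1) =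
      ∏ a ∈ A, ∏ b ∈ B, if g a = g b then 1 - lam else 1 :=
    prod_congr rfl fun a ha => prod_congr rfl fun b hb => by simp only [hAB a ha b hb, true_and]
  simp only [collisionWeight, prod_union hdisj, prod_mul_distrib, hBA, hAB']
  ring

lemma collisionWeight_le_mul (h0 : 0 ≤ lam) (h1 : lam ≤ 1) (g : ℕ → α) {s n : ℕ} (hs : s ≤ n) :
    collisionWeight lam g (range (n + 1)) ≤
      collisionWeight lam g (range (s + 1)) * collisionWeight lam g (Ico s (n + 1)) := by
  set c : ℕ × ℕ → ℝ := fun p => if p.1 < p.2 ∧ g p.1 = g p.2 then 1 - lam else 1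
  have hc0 : ∀ p, 0 ≤ c p := fun p => by simp only [c]; split <;> linarith
  have hc1 : ∀ p, c p ≤ 1 := fun p => by simp only [c]; split <;> linarith
  have hprod : ∀ A, collisionWeight lam g A = ∏ p ∈ A ×ˢ A, c p := fun A =>
    (prod_product (f := c) _ _).symm
  set X := range (s + 1) ×ˢ range (s + 1)
  set Y := Ico s (n + 1) ×ˢ Ico s (n + 1)
  -- the two windows share only the time `s`, so no pair `s' < t'` is counted twice
  have hXY : ∏ p ∈ X ∩ Y, c p = 1 := prod_eq_one fun p hp => by
    simp only [X, Y, mem_inter, mem_product, mem_range, mem_Ico] at hp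
    exact if_neg fun h => by omega
  calc collisionWeight lam g (range (n + 1))
      ≤ ∏ p ∈ X ∪ Y, c p := by
        rw [hprod]
        refine prod_le_prod_of_subset_of_le_one (fun p hp => ?_) (fun p _ => hc0 p)
          (fun p _ _ => hc1 p)
        simp only [X, Y, mem_union, mem_product, mem_range, mem_Ico] at hp ⊢
        omega
    _ = _ := by rw [hprod, hprod, ← prod_union_inter, hXY, mul_one]

end CollisionWeight

section PathWeight

open Finset SAWPath

variable {d : ℕ} {lam : ℝ}

lemma weight_eq_collisionWeight (lam : ℝ) (γ : SAWPath d) :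
    weight lam γ = collisionWeight lam γ.eval (range (γ.len + 1)) := by
  rw [weight, collisionWeight, ← Fin.prod_univ_eq_prod_range]
  refine prod_congr rfl fun s _ => ?_
  rw [← Fin.prod_univ_eq_prod_range]
  simp only [eval_val, Fin.lt_def]

lemma weight_ofFun (lam : ℝ) (n : ℕ) (g : ℕ → V d) (hg) :
    weight lam (ofFun n g hg) = collisionWeight lam g (range (n + 1)) := by
  rw [weight_eq_collisionWeight]
  exact collisionWeight_congr fun i hi => eval_ofFun_of_le (Nat.le_of_lt_succ (mem_range.mp hi))

lemma weight_nonneg (h1 : lam ≤ 1) (γ : SAWPath d) : 0 ≤ weight lam γ :=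
  prod_nonneg fun _ _ => prod_nonneg fun _ _ => by split <;> linarith

lemma weight_le_weight_take_mul_weight_drop (h0 : 0 ≤ lam) (h1 : lam ≤ 1) (γ : SAWPath d)
    {s : ℕ} (hs : s ≤ γ.len) :
    weight lam γ ≤ weight lam (γ.take s) * weight lam (γ.drop s) := by
  rw [take, drop, weight_ofFun, weight_ofFun, weight_eq_collisionWeight, min_eq_left hs,
    ← Nat.sub_add_comm hs, ← collisionWeight_Ico]
  exact collisionWeight_le_mul h0 h1 _ hs

def collisions (γ₁ γ₂ : SAWPath d) : Finset (ℕ × ℕ) :=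
  (range (γ₁.len + 1) ×ˢ range (γ₂.len + 1)).filter fun q => γ₁.eval q.1 = γ₂.eval q.2

lemma mem_collisions {γ₁ γ₂ : SAWPath d} {q : ℕ × ℕ} :
    q ∈ collisions γ₁ γ₂ ↔ q.1 ≤ γ₁.len ∧ q.2 ≤ γ₂.len ∧ γ₁.eval q.1 = γ₂.eval q.2 := by
  simp only [collisions, mem_filter, mem_product, mem_range, Nat.lt_succ_iff, and_assoc]

lemma weight_glue (lam : ℝ) (γ₁ γ₂ : SAWPath d) (h) :
    weight lam (glue γ₁ γ₂ h) =
      weight lam γ₁ * weight lam γ₂ * (1 - lam) ^ (collisions γ₁ γ₂).card := by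
  set g := fun i => if i ≤ γ₁.len then γ₁.eval i else γ₂.eval (i - (γ₁.len + 1))
  have hsplit : range (γ₁.len + 1 + γ₂.len + 1) =
      range (γ₁.len + 1) ∪ Ico (γ₁.len + 1) (γ₁.len + 1 + γ₂.len + 1) := by
    rw [range_eq_Ico, range_eq_Ico, Ico_union_Ico_eq_Ico (Nat.zero_le _) (by omega)]
  have hlen : γ₁.len + 1 + γ₂.len + 1 - (γ₁.len + 1) = γ₂.len + 1 := by omega
  have hleft : ∀ i ∈ range (γ₁.len + 1), g i = γ₁.eval i := fun i hi =>
    if_pos (Nat.le_of_lt_succ (mem_range.mp hi))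
  have hright : ∀ i, g (γ₁.len + 1 + i) = γ₂.eval i := fun i => by
    simp only [g, if_neg (show ¬ γ₁.len + 1 + i ≤ γ₁.len by omega), Nat.add_sub_cancel_left]
  have hcross : ∏ a ∈ range (γ₁.len + 1), ∏ b ∈ Ico (γ₁.len + 1) (γ₁.len + 1 + γ₂.len + 1),
      (if g a = g b then 1 - lam else 1) = (1 - lam) ^ (collisions γ₁ γ₂).card := by
    have hcount : ∏ q ∈ range (γ₁.len + 1) ×ˢ range (γ₂.len + 1),
        (if γ₁.eval q.1 = γ₂.eval q.2 then 1 - lam else 1) =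
          (1 - lam) ^ (collisions γ₁ γ₂).card := by
      rw [prod_ite, prod_const, prod_const_one, mul_one, collisions]
    rw [← hcount, prod_product]
    refine prod_congr rfl fun a ha => ?_
    rw [prod_Ico_eq_prod_range, hlen]
    simp only [hleft a ha, hright]
  rw [glue, weight_ofFun, hsplit, collisionWeight_union_of_lt _ (fun a ha b hb => by
      simp only [mem_range, mem_Ico] at ha hb; omega), hcross, collisionWeight_Ico,
    hlen, weight_eq_collisionWeight, weight_eq_collisionWeight,
    collisionWeight_congr hleft, collisionWeight_congr (g' := γ₂.eval) fun i _ => hright i]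

end PathWeight

section PathWeightENNReal

open Finset SAWPath

variable {d : ℕ} {lam β : ℝ}

noncomputable def pathWeight (lam β : ℝ) (γ : SAWPath d) : ℝ≥0∞ :=
  ENNReal.ofReal (β ^ γ.len * weight lam γ)

lemma pathWeight_le_take_mul_drop (h0 : 0 ≤ lam) (h1 : lam ≤ 1) (hβ : 0 ≤ β) (γ : SAWPath d)
    {s : ℕ} (hs : s ≤ γ.len) :
    pathWeight lam β γ ≤ pathWeight lam β (γ.take s) * pathWeight lam β (γ.drop s) := by
  rw [pathWeight, pathWeight, pathWeight,
    ← ENNReal.ofReal_mul (mul_nonneg (pow_nonneg hβ _) (weight_nonneg h1 _))]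
  refine ENNReal.ofReal_le_ofReal ?_
  calc β ^ γ.len * weight lam γ
      ≤ β ^ γ.len * (weight lam (γ.take s) * weight lam (γ.drop s)) :=
        mul_le_mul_of_nonneg_left (weight_le_weight_take_mul_weight_drop h0 h1 γ hs)
          (pow_nonneg hβ _)
    _ = _ := by
        rw [len_take, len_drop, min_eq_left hs, ← Nat.add_sub_cancel' hs, pow_add,
          Nat.add_sub_cancel_left]
        ring

lemma pathWeight_glue (h1 : lam ≤ 1) (hβ : 0 ≤ β) (γ₁ γ₂ : SAWPath d) (h) :
    pathWeight lam β (glue γ₁ γ₂ h) = pathWeight lam β γ₁ * ENNReal.ofReal β *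
      pathWeight lam β γ₂ * ENNReal.ofReal ((1 - lam) ^ (collisions γ₁ γ₂).card) := by
  have hw₁ := mul_nonneg (pow_nonneg hβ γ₁.len) (weight_nonneg h1 γ₁)
  have hw₂ := mul_nonneg (pow_nonneg hβ γ₂.len) (weight_nonneg h1 γ₂)
  rw [pathWeight, pathWeight, pathWeight, ← ENNReal.ofReal_mul hw₁,
    ← ENNReal.ofReal_mul (mul_nonneg hw₁ hβ), ← ENNReal.ofReal_mul (by positivity), len_glue,
    weight_glue, pow_add, pow_succ]
  ring_nf

lemma one_le_ofReal_one_sub_pow_add (h0 : 0 ≤ lam) (h1 : lam ≤ 1) (k : ℕ) :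
    1 ≤ ENNReal.ofReal ((1 - lam) ^ k) + k * ENNReal.ofReal lam := by
  rw [← ENNReal.ofReal_natCast, ← ENNReal.ofReal_mul (Nat.cast_nonneg k),
    ← ENNReal.ofReal_add (pow_nonneg (by linarith) k) (by positivity), ← ENNReal.ofReal_one]
  refine ENNReal.ofReal_le_ofReal ?_
  have := one_add_mul_le_pow (show (-2 : ℝ) ≤ -lam by linarith) k
  rw [← sub_eq_add_neg] at this
  linarith

noncomputable def cutWeight (lam β : ℝ) (γ₁ γ₂ : SAWPath d) (q : ℕ × ℕ) : ℝ≥0∞ :=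
  pathWeight lam β (γ₁.take q.1) * pathWeight lam β (γ₁.drop q.1) * ENNReal.ofReal β *
    pathWeight lam β (γ₂.take q.2) * pathWeight lam β (γ₂.drop q.2)

lemma pathWeight_mul_le (h0 : 0 ≤ lam) (h1 : lam ≤ 1) (hβ : 0 ≤ β) (γ₁ γ₂ : SAWPath d) (h) :
    pathWeight lam β γ₁ * ENNReal.ofReal β * pathWeight lam β γ₂ ≤ pathWeight lam β (glue γ₁ γ₂ h) +
      ENNReal.ofReal lam * ∑ q ∈ collisions γ₁ γ₂, cutWeight lam β γ₁ γ₂ q := by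
  set X := pathWeight lam β γ₁ * ENNReal.ofReal β * pathWeight lam β γ₂
  calc X = X * 1 := (mul_one X).symm
    _ ≤ X * (ENNReal.ofReal ((1 - lam) ^ (collisions γ₁ γ₂).card) +
          (collisions γ₁ γ₂).card * ENNReal.ofReal lam) := by
        gcongr
        exact one_le_ofReal_one_sub_pow_add h0 h1 _
    _ = pathWeight lam β (glue γ₁ γ₂ h) + ENNReal.ofReal lam * ∑ _q ∈ collisions γ₁ γ₂, X := by
        rw [pathWeight_glue h1 hβ, sum_const, nsmul_eq_mul]
        ring
    _ ≤ _ := by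
        gcongr with q hq
        obtain ⟨hs, ht, -⟩ := mem_collisions.mp hq
        calc X ≤ (pathWeight lam β (γ₁.take q.1) * pathWeight lam β (γ₁.drop q.1)) *
              ENNReal.ofReal β *
                (pathWeight lam β (γ₂.take q.2) * pathWeight lam β (γ₂.drop q.2)) :=
              mul_le_mul' (mul_le_mul' (pathWeight_le_take_mul_drop h0 h1 hβ γ₁ hs) le_rfl)
                (pathWeight_le_take_mul_drop h0 h1 hβ γ₂ ht)
          _ = cutWeight lam β γ₁ γ₂ q := by rw [cutWeight]; ring

end PathWeightENNReal

section ExitDecomposition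

open SAWPath

variable {d : ℕ} {lam β : ℝ} {S Λ : Set (V d)} {a b : V d}

abbrev BoundaryEdge (S Λ : Set (V d)) := {p : V d × V d // p.1 ∈ S ∧ p.2 ∈ Λ \ S ∧ Adj p.1 p.2}

/-- A path from `a` to `b` cut at its first exit from `S`: a path in `S` from `a` to some `y`,
a boundary edge `yz`, and a path in `Λ` from `z` to `b`. -/
abbrev ExitDecomp (S Λ : Set (V d)) (a b : V d) :=
  Σ e : BoundaryEdge S Λ, PathsIn S a e.1.1 × PathsIn Λ e.1.2 b

namespace ExitDecomp

variable (k : ExitDecomp S Λ a b)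

abbrev inner : SAWPath d := k.2.1.1

abbrev outer : SAWPath d := k.2.2.1

lemma inner_mem : k.inner ∈ PathsIn S a k.1.1.1 := k.2.1.2

lemma outer_mem : k.outer ∈ PathsIn Λ k.1.1.2 b := k.2.2.2

lemma outer_eval_zero_notMem : k.outer.eval 0 ∉ S := by
  rw [(mem_pathsIn_iff.mp k.outer_mem).1]
  exact k.1.2.2.1.2

lemma adj : Adj (k.inner.eval k.inner.len) (k.outer.eval 0) := by
  rw [(mem_pathsIn_iff.mp k.inner_mem).2.1, (mem_pathsIn_iff.mp k.outer_mem).1]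
  exact k.1.2.2.2

def path : SAWPath d := glue k.inner k.outer k.adj

variable {k}

lemma ext_of_paths {k' : ExitDecomp S Λ a b} (h₁ : k.inner = k'.inner) (h₂ : k.outer = k'.outer) :
    k = k' := by
  obtain ⟨⟨⟨y, z⟩, he⟩, ⟨γ₁, hγ₁⟩, ⟨γ₂, hγ₂⟩⟩ := k
  obtain ⟨⟨⟨y', z'⟩, he'⟩, ⟨γ₁', hγ₁'⟩, ⟨γ₂', hγ₂'⟩⟩ := k'
  obtain rfl : γ₁ = γ₁' := h₁
  obtain rfl : γ₂ = γ₂' := h₂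
  obtain rfl : y = y' := hγ₁.2.1.symm.trans hγ₁'.2.1
  obtain rfl : z = z' := hγ₂.1.symm.trans hγ₂'.1
  rfl

lemma path_mem (hSΛ : S ⊆ Λ) (k : ExitDecomp S Λ a b) :
    k.path ∈ PathsIn Λ a b \ PathsIn S a b := by
  refine ⟨glue_mem (pathsIn_mono hSΛ _ _ k.inner_mem) k.outer_mem _,
    fun hS => k.outer_eval_zero_notMem ?_⟩
  rw [← eval_glue_add k.inner k.outer k.adj (Nat.zero_le _), add_zero]
  exact (mem_pathsIn_iff.mp hS).2.2 _

lemma path_injective : Function.Injective (path : ExitDecomp S Λ a b → SAWPath d) := by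
  intro k k' h
  have hlen : k.inner.len = k'.inner.len :=
    le_antisymm (len_le_of_glue_eq h (mem_pathsIn_iff.mp k.inner_mem).2.2 k'.outer_eval_zero_notMem)
      (len_le_of_glue_eq h.symm (mem_pathsIn_iff.mp k'.inner_mem).2.2 k.outer_eval_zero_notMem)
  refine ext_of_paths ?_ ?_
  · rw [← take_glue k.inner k.outer k.adj, ← take_glue k'.inner k'.outer k'.adj, hlen]
    exact congrArg (take · _) h
  · rw [← drop_glue k.inner k.outer k.adj, ← drop_glue k'.inner k'.outer k'.adj, hlen]
    exact congrArg (drop · _) h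

end ExitDecomp

lemma tsum_mul_tsum_eq {ι κ : Type*} (f : ι → ℝ≥0∞) (g : κ → ℝ≥0∞) :
    (∑' i, f i) * ∑' j, g j = ∑' p : ι × κ, f p.1 * g p.2 := by
  rw [ENNReal.tsum_prod (f := fun i j => f i * g j), ← ENNReal.tsum_mul_right]
  exact tsum_congr fun i => ENNReal.tsum_mul_left.symm

lemma G_eq_tsum (lam β : ℝ) (A : Set (V d)) (a b : V d) :
    G lam β A a b = ∑' γ : PathsIn A a b, pathWeight lam β γ.1 := rfl

lemma G_eq_G_add_tsum_diff (hSΛ : S ⊆ Λ) : G lam β Λ a b =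
    G lam β S a b + ∑' γ : ↥(PathsIn Λ a b \ PathsIn S a b), pathWeight lam β γ.1 := by
  rw [G_eq_tsum, G_eq_tsum, ← Summable.tsum_union_disjoint (f := pathWeight lam β)
    Set.disjoint_sdiff_right ENNReal.summable ENNReal.summable,
    Set.union_sdiff_cancel (pathsIn_mono hSΛ a b)]

lemma tsum_boundaryEdge_eq : ∑' e : BoundaryEdge S Λ,
      G lam β S a e.1.1 * ENNReal.ofReal β * G lam β Λ e.1.2 b =
    ∑' k : ExitDecomp S Λ a b,
      pathWeight lam β k.inner * ENNReal.ofReal β * pathWeight lam β k.outer := by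
  rw [ENNReal.tsum_sigma']
  refine tsum_congr fun e => ?_
  rw [G_eq_tsum, G_eq_tsum, ← ENNReal.tsum_mul_right, tsum_mul_tsum_eq]

lemma tsum_pathWeight_path_le (hSΛ : S ⊆ Λ) :
    ∑' k : ExitDecomp S Λ a b, pathWeight lam β k.path ≤
      ∑' γ : ↥(PathsIn Λ a b \ PathsIn S a b), pathWeight lam β γ.1 :=
  ENNReal.tsum_comp_le_tsum_of_injective (f := fun k => ⟨k.path, k.path_mem hSΛ⟩)
    (fun _ _ h => ExitDecomp.path_injective (congrArg Subtype.val h)) _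

end ExitDecomposition

section Collisions

open SAWPath

variable {d : ℕ} {lam β : ℝ} {S Λ : Set (V d)} {x : V d}

/-- The data summed in `∑_{u ∈ S} E_β^{S,Λ}(u) G_β^Λ(u,x)`: a vertex `u ∈ S`, a boundary edge `yz`,
and paths `0 → u` and `u → y` in `S`, `z → u` and `u → x` in `Λ`. -/
abbrev ErrorData (S Λ : Set (V d)) (x : V d) :=
  Σ u : S, Σ e : BoundaryEdge S Λ,
    ((PathsIn S 0 u.1 × PathsIn S u.1 e.1.1) × PathsIn Λ e.1.2 u.1) × PathsIn Λ u.1 x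

noncomputable def errorWeight (lam β : ℝ) (w : ErrorData S Λ x) : ℝ≥0∞ :=
  pathWeight lam β w.2.2.1.1.1.1 * pathWeight lam β w.2.2.1.1.2.1 * ENNReal.ofReal β *
    pathWeight lam β w.2.2.1.2.1 * pathWeight lam β w.2.2.2.1

lemma tsum_errorWeight_eq :
    ∑' w : ErrorData S Λ x, errorWeight lam β w = ∑' u : S, Efun d lam β S Λ u * G lam β Λ u x := by
  rw [ENNReal.tsum_sigma']
  refine tsum_congr fun u => ?_
  rw [ENNReal.tsum_sigma', Efun, ← ENNReal.tsum_mul_right]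
  refine tsum_congr fun e => ?_
  simp only [G_eq_tsum, errorWeight]
  rw [tsum_mul_tsum_eq, ← ENNReal.tsum_mul_right, tsum_mul_tsum_eq, tsum_mul_tsum_eq]

def cutAtCollision (j : Σ k : ExitDecomp S Λ 0 x, ↥(collisions k.inner k.outer)) :
    ErrorData S Λ x :=
  let k := j.1
  let s := j.2.1.1
  let t := j.2.1.2
  have hq := mem_collisions.mp j.2.2
  have h₃ : k.outer.take t ∈ PathsIn Λ k.1.1.2 (k.inner.eval s) :=
    hq.2.2 ▸ take_mem k.outer_mem hq.2.1
  have h₄ : k.outer.drop t ∈ PathsIn Λ (k.inner.eval s) x :=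
    hq.2.2 ▸ drop_mem k.outer_mem hq.2.1
  ⟨⟨k.inner.eval s, (mem_pathsIn_iff.mp k.inner_mem).2.2 _⟩, k.1,
    ((⟨_, take_mem k.inner_mem hq.1⟩, ⟨_, drop_mem k.inner_mem hq.1⟩), ⟨_, h₃⟩), ⟨_, h₄⟩⟩

lemma cutAtCollision_injective :
    Function.Injective (cutAtCollision : (Σ k : ExitDecomp S Λ 0 x,
      ↥(collisions k.inner k.outer)) → ErrorData S Λ x) := by
  rintro ⟨k, ⟨s, t⟩, hq⟩ ⟨k', ⟨s', t'⟩, hq'⟩ h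
  have hq := mem_collisions.mp hq
  have hq' := mem_collisions.mp hq'
  have htake₁ : k.inner.take s = k'.inner.take s' := congrArg (fun w => w.2.2.1.1.1.1) h
  have htake₂ : k.outer.take t = k'.outer.take t' := congrArg (fun w => w.2.2.1.2.1) h
  obtain rfl : s = s' := by
    simpa [min_eq_left hq.1, min_eq_left hq'.1] using congrArg len htake₁
  obtain rfl : t = t' := by
    simpa [min_eq_left hq.2.1, min_eq_left hq'.2.1] using congrArg len htake₂
  refine Sigma.subtype_ext (ExitDecomp.ext_of_paths ?_ ?_) rfl
  · exact eq_of_take_eq_of_drop_eq hq.1 htake₁ (congrArg (fun w => w.2.2.1.1.2.1) h)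
  · exact eq_of_take_eq_of_drop_eq hq.2.1 htake₂ (congrArg (fun w => w.2.2.2.1) h)

lemma tsum_sum_cutWeight_le :
    ∑' k : ExitDecomp S Λ 0 x, ∑ q ∈ collisions k.inner k.outer, cutWeight lam β k.inner k.outer q ≤
      ∑' u : S, Efun d lam β S Λ u * G lam β Λ u x := by
  have := ENNReal.tsum_comp_le_tsum_of_injective
    (cutAtCollision_injective (S := S) (Λ := Λ) (x := x)) (errorWeight lam β)
  rw [tsum_errorWeight_eq, ENNReal.tsum_sigma'] at this
  refine le_of_eq_of_le (tsum_congr fun k => ?_) this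
  rw [← Finset.tsum_subtype]
  rfl

end Collisions

/-- With the truncated subtraction of `ℝ≥0∞`, the bound says
`G^S(0,x) + Σ ≤ G^Λ(0,x) + λ Σ_u E(u) G^Λ(u,x)`. -/
theorem statement5_general (d : ℕ) (lam : ℝ) (hlam0 : 0 ≤ lam) (hlam1 : lam ≤ 1)
    (β : ℝ) (hβ0 : 0 < β)
    (S Λ : Set (V d)) (hSΛ : S ⊆ Λ) (x : V d) :
    G lam β S 0 x +
        (∑' p : {p : V d × V d // p.1 ∈ S ∧ p.2 ∈ Λ \ S ∧ Adj p.1 p.2},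
          G lam β S 0 p.1.1 * ENNReal.ofReal β * G lam β Λ p.1.2 x) -
        ENNReal.ofReal lam * ∑' u : S, Efun d lam β S Λ u * G lam β Λ u x
      ≤ G lam β Λ 0 x := by
  rw [tsub_le_iff_right, G_eq_G_add_tsum_diff hSΛ, tsum_boundaryEdge_eq, add_assoc]
  gcongr
  calc ∑' k : ExitDecomp S Λ 0 x,
        pathWeight lam β k.inner * ENNReal.ofReal β * pathWeight lam β k.outer
      ≤ ∑' k : ExitDecomp S Λ 0 x, (pathWeight lam β k.path + ENNReal.ofReal lam *
          ∑ q ∈ collisions k.inner k.outer, cutWeight lam β k.inner k.outer q) :=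
        ENNReal.tsum_le_tsum fun k => pathWeight_mul_le hlam0 hlam1 hβ0.le _ _ k.adj
    _ ≤ _ := by
        rw [ENNReal.tsum_add, ENNReal.tsum_mul_left]
        gcongr
        · exact tsum_pathWeight_path_le hSΛ
        · exact tsum_sum_cutWeight_le

/-- **Reversed Simon–Lieb bound.** For `d ≥ 2`, `0 < β < β_c`, `0 ∈ S ⊆ Λ ⊆ ℤ^d` and `x ∈ Λ`:
`G_β^Λ(0,x) ≥ G_β^S(0,x) + Σ_{y∈S, z∈Λ∖S, y∼z} G_β^S(0,y) β G_β^Λ(z,x)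
  - λ Σ_{u∈S} E_β^{S,Λ}(u) G_β^Λ(u,x)`,
stated with the truncated subtraction of `ℝ≥0∞` (equivalently,
`G^S + Σ ≤ G^Λ + λ Σ_u E(u) G^Λ(u,x)`). -/
theorem statement5 (d : ℕ) (hd : 2 ≤ d) (lam : ℝ) (hlam0 : 0 ≤ lam) (hlam1 : lam ≤ 1)
    (β : ℝ) (hβ0 : 0 < β) (hβc : β < betaC d lam)
    (S Λ : Set (V d)) (h0S : (0 : V d) ∈ S) (hSΛ : S ⊆ Λ) (x : V d) (hx : x ∈ Λ) :
    G lam β S 0 x +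
        (∑' p : {p : V d × V d // p.1 ∈ S ∧ p.2 ∈ Λ \ S ∧ Adj p.1 p.2},
          G lam β S 0 p.1.1 * ENNReal.ofReal β * G lam β Λ p.1.2 x) -
        ENNReal.ofReal lam * ∑' u : S, Efun d lam β S Λ u * G lam β Λ u x
      ≤ G lam β Λ 0 x :=
  statement5_general d lam hlam0 hlam1 β hβ0 S Λ hSΛ x

end WSAW
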